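/- arXiv:2503.07623 — 2 statements merged into one kernel-verified Lean document; each statement's English description precedes it below -/
import Mathlib

section
/- Let u : EuclideanSpace ℝ (Fin n) → ℝ be C². Then for every x, div(y ↦ exp(‖∇u(y)‖²/2) • ∇u(y))(x) = exp(‖∇u(x)‖²/2) · (Δu(x) + Hess u(x)(∇u(x), ∇u(x))). In particular, u is exponentially harmonic if and only if Δu(x) + Hess u(x)(∇u(x), ∇u(x)) = 0 for all x. -/
open scoped RealInnerProductSpace
open Real MeasureTheory

noncomputable def Hess {n : ℕ} (f : EuclideanSpace ℝ (Fin n) → ℝ)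
    (x v w : EuclideanSpace ℝ (Fin n)) : ℝ :=
  iteratedFDeriv ℝ 2 f x ![v, w]

noncomputable def lap {n : ℕ} (f : EuclideanSpace ℝ (Fin n) → ℝ)
    (x : EuclideanSpace ℝ (Fin n)) : ℝ :=
  ∑ i, Hess f x (EuclideanSpace.basisFun (Fin n) ℝ i) (EuclideanSpace.basisFun (Fin n) ℝ i)

noncomputable def divg {n : ℕ} (X : EuclideanSpace ℝ (Fin n) → EuclideanSpace ℝ (Fin n))
    (x : EuclideanSpace ℝ (Fin n)) : ℝ :=
  ∑ i, ⟪fderiv ℝ X x (EuclideanSpace.basisFun (Fin n) ℝ i), EuclideanSpace.basisFun (Fin n) ℝ i⟫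

/-!
Write `G = ∇u` and `φ = exp (‖G‖² / 2)`. The divergence obeys the product rule
`div (φ • G) = Dφ (G) + φ · div G`; here `div G = Δu` and, by the chain rule,
`Dφ (v) = φ · ⟪DG v, G⟫ = φ · Hess u (v, G)`. Evaluating at `v = G` gives the identity,
and the factor `φ` never vanishes.
-/

open InnerProductSpace

section Gradient

variable {F : Type*} [NormedAddCommGroup F] [InnerProductSpace ℝ F] [CompleteSpace F]

lemma ContDiff.gradient {k : WithTop ℕ∞} {u : F → ℝ} (hu : ContDiff ℝ (k + 1) u) :
    ContDiff ℝ k (gradient u) :=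
  (toDual ℝ F).symm.contDiff.comp (hu.fderiv_right le_rfl)

lemma inner_fderiv_gradient (u : F → ℝ) (x v w : F) :
    ⟪fderiv ℝ (gradient u) x v, w⟫ = fderiv ℝ (fderiv ℝ u) x v w := by
  let e : StrongDual ℝ F ≃L[ℝ] F := (toDual ℝ F).symm.toContinuousLinearEquiv
  have : gradient u = e ∘ fderiv ℝ u := rfl
  rw [this, e.comp_fderiv]
  exact toDual_symm_apply

end Gradient

lemma HasFDerivAt.exp_half_norm_sq {F : Type*} [NormedAddCommGroup F] [InnerProductSpace ℝ F]
    {G : F → F} {G' : F →L[ℝ] F} {x : F} (hG : HasFDerivAt G G' x) :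
    HasFDerivAt (fun y => Real.exp (‖G y‖ ^ 2 / 2))
      (Real.exp (‖G x‖ ^ 2 / 2) • (innerSL ℝ (G x)).comp G') x := by
  simp_rw [div_eq_mul_inv]
  convert (hG.norm_sq.mul_const (2⁻¹ : ℝ)).exp using 2
  ext v
  simp

lemma OrthonormalBasis.sum_apply_mul_inner {ι F : Type*} [Fintype ι] [NormedAddCommGroup F]
    [InnerProductSpace ℝ F] (b : OrthonormalBasis ι ℝ F) (L : F →L[ℝ] ℝ) (v : F) :
    ∑ i, L (b i) * ⟪v, b i⟫ = L v := by
  conv_rhs => rw [← b.sum_repr' v]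
  simp [map_sum, real_inner_comm, mul_comm]

section Euclidean

variable {n : ℕ}

local notation "E" => EuclideanSpace ℝ (Fin n)

lemma Hess_eq_fderiv_fderiv (u : E → ℝ) (x v w : E) :
    Hess u x v w = fderiv ℝ (fderiv ℝ u) x v w := by
  simp [Hess, iteratedFDeriv_two_apply]

lemma Hess_eq_inner_fderiv_gradient (u : E → ℝ) (x v w : E) :
    Hess u x v w = ⟪fderiv ℝ (gradient u) x v, w⟫ := by
  rw [inner_fderiv_gradient, Hess_eq_fderiv_fderiv]

lemma divg_gradient (u : E → ℝ) (x : E) :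
    divg (gradient u) x = lap u x := by
  simp only [divg, lap, Hess_eq_inner_fderiv_gradient]

lemma divg_smul {φ : E → ℝ} {X : E → E} {x : E}
    (hφ : DifferentiableAt ℝ φ x) (hX : DifferentiableAt ℝ X x) :
    divg (fun y => φ y • X y) x = fderiv ℝ φ x (X x) + φ x * divg X x := by
  have hD : fderiv ℝ (fun y => φ y • X y) x
      = φ x • fderiv ℝ X x + (fderiv ℝ φ x).smulRight (X x) :=
    fderiv_smul hφ hX
  rw [divg, divg, hD]
  simp only [add_apply, smul_apply, ContinuousLinearMap.smulRight_apply, inner_add_left,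
    real_inner_smul_left, Finset.sum_add_distrib, ← Finset.mul_sum,
    OrthonormalBasis.sum_apply_mul_inner]
  ring

lemma divg_exp_half_norm_sq_smul_gradient {u : E → ℝ} (hu : ContDiff ℝ 2 u) (x : E) :
    divg (fun y => exp (‖gradient u y‖ ^ 2 / 2) • gradient u y) x
      = exp (‖gradient u x‖ ^ 2 / 2) * (lap u x + Hess u x (gradient u x) (gradient u x)) := by
  have hG : HasFDerivAt (gradient u) (fderiv ℝ (gradient u) x) x :=
    ((hu.gradient (k := 1)).differentiable one_ne_zero x).hasFDerivAt
  have hφ := hG.exp_half_norm_sq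
  rw [divg_smul hφ.differentiableAt hG.differentiableAt, hφ.fderiv, divg_gradient,
    Hess_eq_inner_fderiv_gradient]
  simp only [smul_apply, ContinuousLinearMap.comp_apply, innerSL_apply_apply,
    smul_eq_mul, real_inner_comm]
  ring

end Euclidean

/-- The divergence-form exponentially harmonic operator expands to the quasilinear
elliptic operator `exp(‖∇u‖²/2)·(Δu + Hess u(∇u,∇u))`; in particular `u` is
exponentially harmonic iff `Δu + Hess u(∇u,∇u) = 0` everywhere. -/
theorem stmt_1 {n : ℕ} (u : EuclideanSpace ℝ (Fin n) → ℝ) (hu : ContDiff ℝ 2 u) :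
    (∀ x, divg (fun y => Real.exp (‖gradient u y‖ ^ 2 / 2) • gradient u y) x
      = Real.exp (‖gradient u x‖ ^ 2 / 2)
        * (lap u x + Hess u x (gradient u x) (gradient u x))) ∧
    ((∀ x, divg (fun y => Real.exp (‖gradient u y‖ ^ 2 / 2) • gradient u y) x = 0)
      ↔ (∀ x, lap u x + Hess u x (gradient u x) (gradient u x) = 0)) := by
  have expand := divg_exp_half_norm_sq_smul_gradient hu
  refine ⟨expand, forall_congr' fun x => ?_⟩
  rw [expand x, mul_eq_zero, or_iff_right (exp_ne_zero _)]
end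

section
/- Let u : EuclideanSpace ℝ (Fin n) → ℝ be C² and satisfy Δu(x) + Hess u(x)(∇u(x), ∇u(x)) = 0 for all x (exponential harmonicity), and let φ : ℝ → ℝ be C². Set e(x) := ‖∇u(x)‖². Then for every x: Δ(φ∘u)(x) + Hess(φ∘u)(x)(∇u(x), ∇u(x)) = φ''(u(x)) · (e(x) + e(x)²). -/
/-!
The chain rule gives `Hess (φ ∘ u)(v, w) = φ''(u) ⟪∇u, v⟫⟪∇u, w⟫ + φ'(u) Hess u (v, w)`. Taking the
trace yields `Δ(φ ∘ u) = φ''(u) e + φ'(u) Δu` and evaluating at `v = w = ∇u` yields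
`φ''(u) e² + φ'(u) Hess u (∇u, ∇u)`; in the sum the `φ'(u)` terms cancel by exponential harmonicity.
-/

open scoped RealInnerProductSpace
open Real MeasureTheory

section Composition
variable {E : Type*} [NormedAddCommGroup E] [NormedSpace ℝ E] {φ : ℝ → ℝ} {u : E → ℝ}

theorem fderiv_comp_eq_deriv_smul (hφ : Differentiable ℝ φ) (hu : Differentiable ℝ u) :
    fderiv ℝ (φ ∘ u) = fun y ↦ deriv φ (u y) • fderiv ℝ u y :=
  funext fun y ↦ ((hφ _).hasDerivAt.comp_hasFDerivAt y (hu y).hasFDerivAt).fderiv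

theorem iteratedFDeriv_two_comp_apply (hφ : ContDiff ℝ 2 φ) (hu : ContDiff ℝ 2 u) (x v w : E) :
    iteratedFDeriv ℝ 2 (φ ∘ u) x ![v, w] =
      deriv (deriv φ) (u x) * (fderiv ℝ u x v * fderiv ℝ u x w) +
        deriv φ (u x) * iteratedFDeriv ℝ 2 u x ![v, w] := by
  have hφ' : Differentiable ℝ (deriv φ) :=
    (hφ.iterate_deriv' 1 1).differentiable one_ne_zero
  have hu' : Differentiable ℝ (fderiv ℝ u) :=
    (hu.fderiv_right (m := 1) (by norm_num)).differentiable one_ne_zero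
  have hprod : HasFDerivAt (fun y ↦ deriv φ (u y) • fderiv ℝ u y) _ x :=
    ((hφ' (u x)).hasDerivAt.comp_hasFDerivAt x (hu.differentiable two_ne_zero x).hasFDerivAt).smul
      (hu' x).hasFDerivAt
  simp only [iteratedFDeriv_two_apply]
  rw [fderiv_comp_eq_deriv_smul (hφ.differentiable two_ne_zero)
    (hu.differentiable two_ne_zero), hprod.fderiv]
  simp only [Matrix.cons_val_zero, Matrix.cons_val_one, add_apply, smul_apply,
    ContinuousLinearMap.smulRight_apply, smul_eq_mul, Function.comp_apply]
  ring

end Composition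

section Euclidean
variable {n : ℕ} {φ : ℝ → ℝ} {u : EuclideanSpace ℝ (Fin n) → ℝ}

theorem Hess_comp (hφ : ContDiff ℝ 2 φ) (hu : ContDiff ℝ 2 u)
    (x v w : EuclideanSpace ℝ (Fin n)) :
    Hess (φ ∘ u) x v w =
      deriv (deriv φ) (u x) * (⟪gradient u x, v⟫ * ⟪gradient u x, w⟫) +
        deriv φ (u x) * Hess u x v w := by
  simp only [Hess, inner_gradient_left, iteratedFDeriv_two_comp_apply hφ hu]

theorem lap_comp (hφ : ContDiff ℝ 2 φ) (hu : ContDiff ℝ 2 u) (x : EuclideanSpace ℝ (Fin n)) :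
    lap (φ ∘ u) x =
      deriv (deriv φ) (u x) * ‖gradient u x‖ ^ 2 + deriv φ (u x) * lap u x := by
  simp only [lap, Hess_comp hφ hu, ← sq, Finset.sum_add_distrib, ← Finset.mul_sum,
    (EuclideanSpace.basisFun (Fin n) ℝ).sum_sq_inner_left]

end Euclidean

/-- For an exponentially harmonic `u` and a C² function `φ : ℝ → ℝ`,
`Δ̂(φ∘u) = φ''(u)(e(u) + e(u)²)` (flat case). -/
theorem stmt_5 {n : ℕ} (u : EuclideanSpace ℝ (Fin n) → ℝ) (hu : ContDiff ℝ 2 u)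
    (hharm : ∀ x, lap u x + Hess u x (gradient u x) (gradient u x) = 0)
    (φ : ℝ → ℝ) (hφ : ContDiff ℝ 2 φ)
    (e : EuclideanSpace ℝ (Fin n) → ℝ) (he : e = fun x => ‖gradient u x‖ ^ 2) :
    ∀ x, lap (φ ∘ u) x + Hess (φ ∘ u) x (gradient u x) (gradient u x)
      = deriv (deriv φ) (u x) * (e x + e x ^ 2) := by
  intro x
  subst he
  rw [lap_comp hφ hu, Hess_comp hφ hu, real_inner_self_eq_norm_sq]
  linear_combination deriv φ (u x) * hharm x
end
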